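/- arXiv:2401.07300 — 5 statements merged into one kernel-verified Lean document; each statement's English description precedes it below -/
import Mathlib

section
/- (Uniqueness of the PBDW perfect-data estimate.) Assume β_{N,M} > 0. If u₁ = z₁ + η₁ and u₂ = z₂ + η₂ with z₁, z₂ ∈ Z_N and η₁, η₂ ∈ U_M ∩ Z_N^⊥ satisfy Π u₁ = Π u₂, then u₁ = u₂. In particular, for any u_true ∈ U there is at most one PBDW estimate with perfect data. -/
/-!
With `z = z₁ - z₂ ∈ ZN` and `η = η₁ - η₂ ∈ UM ⊓ ZNᗮ` we get `Π (z + η) = 0`, i.e. `Π z = -η`.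
Self-adjointness of `Π` then gives `‖η‖² = -⟪Π z, η⟫ = -⟪z, Π η⟫ = -⟪z, η⟫ = 0`,
so `Π z = 0`, and the stability estimate with `β > 0` forces `z = 0`.
-/

open Submodule

namespace Submodule

variable {𝕜 E : Type*} [RCLike 𝕜] [NormedAddCommGroup E] [InnerProductSpace 𝕜 E]
  {Z K : Submodule 𝕜 E} [K.HasOrthogonalProjection]

theorem eq_zero_of_mem_of_starProjection_eq_zero {β : ℝ} (hβ : 0 < β)
    (hstab : ∀ z ∈ Z, β * ‖z‖ ≤ ‖K.starProjection z‖) {z : E} (hz : z ∈ Z)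
    (h : K.starProjection z = 0) : z = 0 := by
  have hβz : β * ‖z‖ ≤ 0 := by simpa [h] using hstab z hz
  exact norm_le_zero_iff.mp (nonpos_of_mul_nonpos_right hβz hβ)

theorem eq_zero_of_starProjection_add_eq_zero {z η : E} (hz : z ∈ Z) (hη : η ∈ K ⊓ Zᗮ)
    (h : K.starProjection (z + η) = 0) : η = 0 := by
  obtain ⟨hηK, hηZ⟩ := hη
  have hPη : K.starProjection η = η := starProjection_eq_self_iff.mpr hηK
  have hPz : K.starProjection z = -η := by
    rwa [map_add, hPη, add_eq_zero_iff_eq_neg] at h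
  have hinner : (inner 𝕜 η η : 𝕜) = 0 := by
    calc inner 𝕜 η η = -inner 𝕜 (K.starProjection z) η := by rw [hPz, inner_neg_left, neg_neg]
      _ = -inner 𝕜 z (K.starProjection η) := by rw [inner_starProjection_left_eq_right]
      _ = 0 := by rw [hPη, inner_right_of_mem_orthogonal hz hηZ, neg_zero]
  exact inner_self_eq_zero.mp hinner

theorem add_eq_zero_of_starProjection_add_eq_zero {β : ℝ} (hβ : 0 < β)
    (hstab : ∀ z ∈ Z, β * ‖z‖ ≤ ‖K.starProjection z‖) {z η : E} (hz : z ∈ Z)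
    (hη : η ∈ K ⊓ Zᗮ) (h : K.starProjection (z + η) = 0) : z + η = 0 := by
  obtain rfl := eq_zero_of_starProjection_add_eq_zero hz hη h
  rw [add_zero] at h ⊢
  exact eq_zero_of_mem_of_starProjection_eq_zero hβ hstab hz h

end Submodule

theorem pbdw_perfect_data_estimate_unique_general
    {U : Type*} [NormedAddCommGroup U] [InnerProductSpace ℝ U]
    (ZN UM : Submodule ℝ U) [FiniteDimensional ℝ UM]
    (β : ℝ) (hβ : 0 < β)
    (hstab : ∀ z ∈ ZN, β * ‖z‖ ≤ ‖(orthogonalProjection UM z : U)‖)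
    (u₁ u₂ z₁ z₂ η₁ η₂ : U)
    (hz₁ : z₁ ∈ ZN) (hz₂ : z₂ ∈ ZN)
    (hη₁ : η₁ ∈ UM ⊓ ZNᗮ) (hη₂ : η₂ ∈ UM ⊓ ZNᗮ)
    (hu₁ : u₁ = z₁ + η₁) (hu₂ : u₂ = z₂ + η₂)
    (hproj : orthogonalProjection UM u₁ = orthogonalProjection UM u₂) :
    u₁ = u₂ := by
  have hdiff : z₁ - z₂ + (η₁ - η₂) = u₁ - u₂ := by rw [hu₁, hu₂, sub_add_sub_comm]
  have hP : UM.starProjection (z₁ - z₂ + (η₁ - η₂)) = 0 := by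
    rw [hdiff, map_sub, starProjection_apply, starProjection_apply, hproj, sub_self]
  rw [← sub_eq_zero, ← hdiff]
  exact add_eq_zero_of_starProjection_add_eq_zero hβ hstab (ZN.sub_mem hz₁ hz₂)
    ((UM ⊓ ZNᗮ).sub_mem hη₁ hη₂) hP

/-- **Uniqueness of the PBDW perfect-data estimate.**
Assume the stability constant `β` is positive.  If `u₁ = z₁ + η₁` and `u₂ = z₂ + η₂`
with `z₁, z₂ ∈ ZN`, `η₁, η₂ ∈ UM ⊓ ZNᗮ` have the same orthogonal projection onto the
update space `UM`, then `u₁ = u₂`.  In particular, for any `utrue` there is at most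
one PBDW estimate with perfect data. -/
theorem pbdw_perfect_data_estimate_unique
    {U : Type*} [NormedAddCommGroup U] [InnerProductSpace ℝ U] [CompleteSpace U]
    (ZN UM : Submodule ℝ U) [FiniteDimensional ℝ ZN] [FiniteDimensional ℝ UM]
    (β : ℝ) (hβ : 0 < β)
    (hstab : ∀ z ∈ ZN, β * ‖z‖ ≤ ‖(orthogonalProjection UM z : U)‖)
    (u₁ u₂ z₁ z₂ η₁ η₂ : U)
    (hz₁ : z₁ ∈ ZN) (hz₂ : z₂ ∈ ZN)
    (hη₁ : η₁ ∈ UM ⊓ ZNᗮ) (hη₂ : η₂ ∈ UM ⊓ ZNᗮ)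
    (hu₁ : u₁ = z₁ + η₁) (hu₂ : u₂ = z₂ + η₂)
    (hproj : orthogonalProjection UM u₁ = orthogonalProjection UM u₂) :
    u₁ = u₂ :=
  pbdw_perfect_data_estimate_unique_general ZN UM β hβ hstab u₁ u₂ z₁ z₂ η₁ η₂ hz₁ hz₂ hη₁ hη₂ hu₁
    hu₂ hproj
end

section
/- (Dimension of the update component.) Assume Z_N has dimension N, U_M has dimension M, and β_{N,M} > 0. Then the subspace U_M ∩ Z_N^⊥ has dimension exactly M − N. -/
/-!
For finite-dimensional subspaces `K`, `L`, the map `u ↦ P_K u` from `L` to `K` has kernel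
`L ⊓ Kᗮ`, and its adjoint `z ↦ P_L z` from `K` to `L` has kernel `K ⊓ Lᗮ`. A map and its
adjoint have the same rank, so rank–nullity gives `dim (L ⊓ Kᗮ) + dim K = dim (K ⊓ Lᗮ) + dim L`.
A positive stability constant forces `Z_N ⊓ U_Mᗮ = 0`, hence `dim (U_M ⊓ Z_Nᗮ) = M - N`.
-/

open Submodule

namespace Submodule

variable {𝕜 E : Type*} [RCLike 𝕜] [NormedAddCommGroup E] [InnerProductSpace 𝕜 E]

noncomputable def restrictOrthogonalProjection (K L : Submodule 𝕜 E) [K.HasOrthogonalProjection] :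
    L →ₗ[𝕜] K :=
  K.orthogonalProjectionOnto.toLinearMap ∘ₗ L.subtype

theorem finrank_ker_restrictOrthogonalProjection (K L : Submodule 𝕜 E)
    [K.HasOrthogonalProjection] :
    Module.finrank 𝕜 (LinearMap.ker (K.restrictOrthogonalProjection L)) =
      Module.finrank 𝕜 ↥(L ⊓ Kᗮ) := by
  have hker : LinearMap.ker (K.restrictOrthogonalProjection L) = (L ⊓ Kᗮ).comap L.subtype := by
    ext u
    simp [restrictOrthogonalProjection, orthogonalProjectionOnto_eq_zero_iff]
  rw [hker]
  exact (comapSubtypeEquivOfLe inf_le_left).finrank_eq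

theorem adjoint_restrictOrthogonalProjection (K L : Submodule 𝕜 E) [FiniteDimensional 𝕜 K]
    [FiniteDimensional 𝕜 L] :
    LinearMap.adjoint (K.restrictOrthogonalProjection L) = L.restrictOrthogonalProjection K := by
  refine ((LinearMap.eq_adjoint_iff _ _).mpr fun x y => ?_).symm
  simp only [restrictOrthogonalProjection, LinearMap.comp_apply, ContinuousLinearMap.coe_coe,
    coe_subtype, inner_orthogonalProjectionOnto_eq_of_mem_right,
    inner_orthogonalProjectionOnto_eq_of_mem_left]

theorem finrank_inf_orthogonal_add_finrank (K L : Submodule 𝕜 E) [FiniteDimensional 𝕜 K]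
    [FiniteDimensional 𝕜 L] :
    Module.finrank 𝕜 ↥(L ⊓ Kᗮ) + Module.finrank 𝕜 K =
      Module.finrank 𝕜 ↥(K ⊓ Lᗮ) + Module.finrank 𝕜 L := by
  have hL := (K.restrictOrthogonalProjection L).finrank_range_add_finrank_ker
  have hK := (L.restrictOrthogonalProjection K).finrank_range_add_finrank_ker
  have hrank := (K.restrictOrthogonalProjection L).finrank_range_adjoint
  rw [adjoint_restrictOrthogonalProjection] at hrank
  rw [finrank_ker_restrictOrthogonalProjection] at hL hK
  omega

theorem inf_orthogonal_eq_bot_of_mul_norm_le {K L : Submodule 𝕜 E} [L.HasOrthogonalProjection]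
    {β : ℝ} (hβ : 0 < β) (hstab : ∀ z ∈ K, β * ‖z‖ ≤ ‖(L.orthogonalProjectionOnto z : E)‖) :
    K ⊓ Lᗮ = ⊥ := by
  refine eq_bot_iff.mpr fun z ⟨hzK, hzL⟩ => ?_
  have h := hstab z hzK
  rw [orthogonalProjectionOnto_eq_zero_iff.mpr hzL, ZeroMemClass.coe_zero, norm_zero] at h
  exact norm_le_zero_iff.mp (nonpos_of_mul_nonpos_right h hβ)

end Submodule

theorem pbdw_update_component_dim_general
    {U : Type*} [NormedAddCommGroup U] [InnerProductSpace ℝ U]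
    (ZN UM : Submodule ℝ U) [FiniteDimensional ℝ ZN] [FiniteDimensional ℝ UM]
    (N M : ℕ) (hN : Module.finrank ℝ ZN = N) (hM : Module.finrank ℝ UM = M)
    (β : ℝ) (hβ : 0 < β)
    (hstab : ∀ z ∈ ZN, β * ‖z‖ ≤ ‖(orthogonalProjection UM z : U)‖) :
    Module.finrank ℝ ↥(UM ⊓ ZNᗮ) = M - N := by
  have hdim := finrank_inf_orthogonal_add_finrank ZN UM
  rw [inf_orthogonal_eq_bot_of_mul_norm_le hβ hstab, finrank_bot] at hdim
  omega

/-- **Dimension of the update component.**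
If `ZN` has dimension `N`, `UM` has dimension `M`, and the stability constant `β` is
positive (i.e. `β‖z‖ ≤ ‖Π z‖` on `ZN` with `Π` the orthogonal projection onto `UM`),
then `UM ⊓ ZNᗮ` has dimension exactly `M − N`. -/
theorem pbdw_update_component_dim
    {U : Type*} [NormedAddCommGroup U] [InnerProductSpace ℝ U] [CompleteSpace U]
    (ZN UM : Submodule ℝ U) [FiniteDimensional ℝ ZN] [FiniteDimensional ℝ UM]
    (N M : ℕ) (hN : Module.finrank ℝ ZN = N) (hM : Module.finrank ℝ UM = M)
    (β : ℝ) (hβ : 0 < β)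
    (hstab : ∀ z ∈ ZN, β * ‖z‖ ≤ ‖(orthogonalProjection UM z : U)‖) :
    Module.finrank ℝ ↥(UM ⊓ ZNᗮ) = M - N :=
  pbdw_update_component_dim_general ZN UM N M hN hM β hβ hstab
end

section
/- (Exact recovery corollary of Theorem 1.) Assume β_{N,M} > 0 and suppose the true state satisfies u_true = z + η for some z ∈ Z_N and η ∈ U_M ∩ Z_N^⊥ (no model bias outside the background and update spaces). Then any PBDW estimate u* with perfect data coincides with u_true: u* = u_true. -/
/-!
Write `ustar - utrue = d - e` with `d = zstar - z ∈ ZN` and `e = η - ηstar ∈ UM ⊓ ZNᗮ`.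
Perfect data says `d - e ⊥ UM`; pairing with `e ∈ UM` and using `e ⊥ d` gives `‖e‖² = 0`.
Then `d ∈ ZN ⊓ UMᗮ`, which is trivial as soon as the stability constant is positive.
-/

open Submodule RealInnerProductSpace

namespace Submodule

variable {U : Type*} [NormedAddCommGroup U] [InnerProductSpace ℝ U]

theorem eq_zero_of_sub_mem_orthogonal {K V : Submodule ℝ U} {d e : U} (hd : d ∈ K)
    (he : e ∈ V ⊓ Kᗮ) (hde : d - e ∈ Vᗮ) : e = 0 := by
  have hde_e : ⟪d - e, e⟫ = 0 := inner_left_of_mem_orthogonal he.1 hde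
  have hd_e : ⟪d, e⟫ = 0 := inner_right_of_mem_orthogonal hd he.2
  rw [inner_sub_left, hd_e, zero_sub, neg_eq_zero] at hde_e
  exact inner_self_eq_zero.mp hde_e

theorem inf_orthogonal_eq_bot_of_stability {K V : Submodule ℝ U} [V.HasOrthogonalProjection]
    {β : ℝ} (hβ : 0 < β) (hstab : ∀ z ∈ K, β * ‖z‖ ≤ ‖(V.orthogonalProjectionOnto z : U)‖) :
    K ⊓ Vᗮ = ⊥ := by
  refine eq_bot_iff.mpr fun z ⟨hzK, hzV⟩ ↦ (mem_bot ℝ).mpr ?_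
  have h := hstab z hzK
  rw [orthogonalProjectionOnto_eq_zero_iff.mpr hzV, ZeroMemClass.coe_zero, norm_zero] at h
  exact norm_le_zero_iff.mp (nonpos_of_mul_nonpos_right h hβ)

end Submodule

theorem pbdw_exact_recovery_general
    {U : Type*} [NormedAddCommGroup U] [InnerProductSpace ℝ U]
    (ZN UM : Submodule ℝ U) [FiniteDimensional ℝ UM]
    (β : ℝ) (hβ : 0 < β)
    (hstab : ∀ z ∈ ZN, β * ‖z‖ ≤ ‖(orthogonalProjection UM z : U)‖)
    (utrue z η : U) (hz : z ∈ ZN) (hη : η ∈ UM ⊓ ZNᗮ) (htrue : utrue = z + η)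
    (ustar zstar ηstar : U)
    (hzstar : zstar ∈ ZN) (hηstar : ηstar ∈ UM ⊓ ZNᗮ)
    (hsum : ustar = zstar + ηstar)
    (hinterp : orthogonalProjection UM ustar = orthogonalProjection UM utrue) :
    ustar = utrue := by
  have hd : zstar - z ∈ ZN := ZN.sub_mem hzstar hz
  have he : η - ηstar ∈ UM ⊓ ZNᗮ := (UM ⊓ ZNᗮ).sub_mem hη hηstar
  have hde : (zstar - z) - (η - ηstar) ∈ UMᗮ := by
    rw [← orthogonalProjectionOnto_eq_zero_iff, show (zstar - z) - (η - ηstar) = ustar - utrue by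
      rw [hsum, htrue]; abel, map_sub, hinterp, sub_self]
  have he0 : η - ηstar = 0 := eq_zero_of_sub_mem_orthogonal hd he hde
  rw [he0, sub_zero] at hde
  have hd0 : zstar - z = 0 :=
    (Submodule.eq_bot_iff _).mp (inf_orthogonal_eq_bot_of_stability hβ hstab) _ ⟨hd, hde⟩
  rw [hsum, htrue, sub_eq_zero.mp hd0, sub_eq_zero.mp he0]

/-- **Exact recovery corollary of Theorem 1.**
Assume the stability constant `β` is positive and the true state has no model bias
outside the background and update spaces: `utrue = z + η` with `z ∈ ZN` and
`η ∈ UM ⊓ ZNᗮ`.  Then any PBDW estimate `ustar` with perfect data coincides with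
`utrue`. -/
theorem pbdw_exact_recovery
    {U : Type*} [NormedAddCommGroup U] [InnerProductSpace ℝ U] [CompleteSpace U]
    (ZN UM : Submodule ℝ U) [FiniteDimensional ℝ ZN] [FiniteDimensional ℝ UM]
    (β : ℝ) (hβ : 0 < β)
    (hstab : ∀ z ∈ ZN, β * ‖z‖ ≤ ‖(orthogonalProjection UM z : U)‖)
    (utrue z η : U) (hz : z ∈ ZN) (hη : η ∈ UM ⊓ ZNᗮ) (htrue : utrue = z + η)
    (ustar zstar ηstar : U)
    (hzstar : zstar ∈ ZN) (hηstar : ηstar ∈ UM ⊓ ZNᗮ)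
    (hsum : ustar = zstar + ηstar)
    (hinterp : orthogonalProjection UM ustar = orthogonalProjection UM utrue) :
    ustar = utrue :=
  pbdw_exact_recovery_general ZN UM β hβ hstab utrue z η hz hη htrue ustar zstar ηstar hzstar hηstar
    hsum hinterp
end

section
/- (PBDW a priori bias estimate for imperfect measurements, first estimate of Theorem 2, matrix form.) Let ξ ≥ 0 and assume P(ξ) and P(0) are invertible. Let ε be a random vector in ℝ^M whose components are integrable with mean zero. Then, for any s > 0 such that s‖x‖₂ ≤ ‖P(ξ)x‖₂ for all x ∈ ℝ^{M+N} (in particular for s = s_min(P(ξ)), the minimum singular value of P(ξ)), one has ‖𝔼[u*_ξ(ε)] − u^opt_{ξ=0}‖₂ ≤ (ξ·M / s) · ‖θ^opt‖₂, where the expectation of the random vector u*_ξ(ε) is taken componentwise. -/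
open Matrix MeasureTheory

/-- Euclidean norm `‖x‖₂` of a real vector. -/
noncomputable def euclNorm {ι : Type*} [Fintype ι] (x : ι → ℝ) : ℝ :=
  ‖(EuclideanSpace.equiv ι ℝ).symm x‖

/-- The regularised PBDW saddle-point matrix `P(ξ) = [[A + ξM·I, K], [Kᵀ, 0]]`. -/
noncomputable def pbdwMat {M N : ℕ} (A : Matrix (Fin M) (Fin M) ℝ)
    (K : Matrix (Fin M) (Fin N) ℝ) (ξ : ℝ) :
    Matrix (Fin M ⊕ Fin N) (Fin M ⊕ Fin N) ℝ :=
  Matrix.fromBlocks (A + (ξ * (M : ℝ)) • (1 : Matrix (Fin M) (Fin M) ℝ)) K Kᵀ 0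

lemma euclNorm_eq {ι : Type*} [Fintype ι] (x : ι → ℝ) :
    euclNorm x = Real.sqrt (∑ i, x i ^ 2) := by
  simp [euclNorm, EuclideanSpace.norm_eq, Real.norm_eq_abs, sq_abs]

lemma pbdw_split {M N : ℕ} (A : Matrix (Fin M) (Fin M) ℝ)
    (K : Matrix (Fin M) (Fin N) ℝ) (ξ : ℝ) :
    pbdwMat A K ξ = pbdwMat A K 0 +
      Matrix.fromBlocks ((ξ * (M : ℝ)) • (1 : Matrix (Fin M) (Fin M) ℝ)) 0 0 0 := by
  simp [pbdwMat, Matrix.fromBlocks_add]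

/-- **PBDW a priori bias estimate for imperfect measurements
(first estimate of Theorem 2, matrix form).**
With `b = (y, 0)`, `u^opt_{ξ=0} = P(0)⁻¹ b`, noisy solution `u*_ξ(ε) = P(ξ)⁻¹ (y+ε, 0)`
for a mean-zero integrable random noise `ε`, and any `s > 0` with
`s‖x‖₂ ≤ ‖P(ξ)x‖₂` for all `x` (in particular `s = s_min(P(ξ))`), one has
`‖𝔼[u*_ξ(ε)] − u^opt_{ξ=0}‖₂ ≤ (ξM/s)·‖θ^opt‖₂`, the expectation being componentwise
and `θ^opt` the first block of `u^opt_{ξ=0}`. -/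
theorem pbdw_bias_estimate_imperfect
    {M N : ℕ} (hM : 0 < M) (hN : 0 < N)
    (A : Matrix (Fin M) (Fin M) ℝ) (hA : A.IsSymm)
    (K : Matrix (Fin M) (Fin N) ℝ)
    (ξ : ℝ) (hξ : 0 ≤ ξ)
    (hPξ : IsUnit (pbdwMat A K ξ)) (hP0 : IsUnit (pbdwMat A K 0))
    {Ω : Type*} [MeasurableSpace Ω] (μ : Measure Ω) [IsProbabilityMeasure μ]
    (ε : Ω → Fin M → ℝ)
    (hint : ∀ i, Integrable (fun ω => ε ω i) μ)
    (hmean : ∀ i, ∫ ω, ε ω i ∂μ = 0)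
    (y : Fin M → ℝ)
    (s : ℝ) (hs : 0 < s)
    (hsmin : ∀ x : Fin M ⊕ Fin N → ℝ,
      s * euclNorm x ≤ euclNorm ((pbdwMat A K ξ).mulVec x)) :
    euclNorm
        ((fun i => ∫ ω, (pbdwMat A K ξ)⁻¹.mulVec (Sum.elim (y + ε ω) 0) i ∂μ)
          - (pbdwMat A K 0)⁻¹.mulVec (Sum.elim y 0))
      ≤ (ξ * (M : ℝ) / s) *
          euclNorm (fun i : Fin M =>
            (pbdwMat A K 0)⁻¹.mulVec (Sum.elim y 0) (Sum.inl i)) := by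
  set Pξ := pbdwMat A K ξ with hPdef
  set P0 := pbdwMat A K 0 with hP0def
  set b : Fin M ⊕ Fin N → ℝ := Sum.elim y 0 with hb
  set u0 := P0⁻¹.mulVec b with hu0
  set uξ := Pξ⁻¹.mulVec b with huξ
  -- Step 1: expectation equals Pξ⁻¹ b
  have hexp : (fun i => ∫ ω, Pξ⁻¹.mulVec (Sum.elim (y + ε ω) 0) i ∂μ) = uξ := by
    funext i
    have hsplit : ∀ ω, Pξ⁻¹.mulVec (Sum.elim (y + ε ω) 0) i
        = uξ i + ∑ k, Pξ⁻¹ i (Sum.inl k) * ε ω k := by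
      intro ω
      have : (Sum.elim (y + ε ω) (0 : Fin N → ℝ))
          = b + Sum.elim (ε ω) 0 := by
        funext j; cases j <;> simp [hb]
      rw [this, Matrix.mulVec_add, Pi.add_apply]
      congr 1
      simp [Matrix.mulVec, dotProduct, Fintype.sum_sum_type]
    simp_rw [hsplit]
    rw [integral_add (integrable_const _)
        (integrable_finset_sum _ (fun k _ => (hint k).const_mul _)),
      integral_const, integral_finset_sum _ (fun k _ => (hint k).const_mul _)]
    simp [integral_const_mul, hmean]
  rw [hexp]
  -- Step 2: Pξ (uξ - u0) = -(ξM) • Ĩ u0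
  have hdetξ : IsUnit Pξ.det := (Matrix.isUnit_iff_isUnit_det _).mp hPξ
  have hdet0 : IsUnit P0.det := (Matrix.isUnit_iff_isUnit_det _).mp hP0
  have hPuξ : Pξ.mulVec uξ = b := by
    rw [huξ, Matrix.mulVec_mulVec, Matrix.mul_nonsing_inv _ hdetξ, Matrix.one_mulVec]
  have hP0u0 : P0.mulVec u0 = b := by
    rw [hu0, Matrix.mulVec_mulVec, Matrix.mul_nonsing_inv _ hdet0, Matrix.one_mulVec]
  set E := Matrix.fromBlocks ((ξ * (M : ℝ)) • (1 : Matrix (Fin M) (Fin M) ℝ)) 0 0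
      (0 : Matrix (Fin N) (Fin N) ℝ) with hE
  have hPsplit : Pξ = P0 + E := pbdw_split A K ξ
  have hEmul : E.mulVec u0 = Sum.elim (fun i => ξ * (M : ℝ) * u0 (Sum.inl i)) 0 := by
    funext j
    cases j with
    | inl i =>
      simp [hE, Matrix.mulVec, dotProduct, Fintype.sum_sum_type,
        Matrix.one_apply, Finset.mul_sum, mul_ite]
    | inr i =>
      simp [hE, Matrix.mulVec, dotProduct, Fintype.sum_sum_type]
  have hkey : Pξ.mulVec (uξ - u0)
      = Sum.elim (fun i => -(ξ * (M : ℝ) * u0 (Sum.inl i))) 0 := by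
    rw [Matrix.mulVec_sub, hPuξ, hPsplit, Matrix.add_mulVec, hP0u0, hEmul]
    funext j; cases j <;> simp
  -- Step 3: norms
  have hnorm : euclNorm (Pξ.mulVec (uξ - u0))
      = ξ * (M : ℝ) * euclNorm (fun i : Fin M => u0 (Sum.inl i)) := by
    rw [hkey, euclNorm_eq, euclNorm_eq, Fintype.sum_sum_type]
    have hc : (0:ℝ) ≤ ξ * M := mul_nonneg hξ (Nat.cast_nonneg _)
    simp only [Sum.elim_inl, Sum.elim_inr, Pi.zero_apply]
    have hq : ∀ z : ℝ, (-(ξ * (M : ℝ) * z)) ^ 2 = (ξ * (M : ℝ)) ^ 2 * z ^ 2 :=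
      fun z => by ring
    simp_rw [hq]
    rw [← Finset.mul_sum]
    have hsum0 : ∑ _i : Fin N, (0 : ℝ) ^ 2 = 0 := by simp
    rw [hsum0, add_zero, Real.sqrt_mul (sq_nonneg _), Real.sqrt_sq hc]
  have hfin := hsmin (uξ - u0)
  rw [hnorm] at hfin
  rw [div_mul_eq_mul_div, le_div_iff₀ hs]
  calc euclNorm (uξ - u0) * s = s * euclNorm (uξ - u0) := mul_comm _ _
    _ ≤ _ := hfin
end

section
/- (PBDW a priori mean-squared error estimate for imperfect measurements, second estimate of Theorem 2, matrix form.) Let ξ ≥ 0 and assume P(ξ) and P(0) are invertible. Let ε = (ε_1, …, ε_M) be a random vector whose components are independent, each distributed as a Gaussian N(0, σ²). Then, for any s > 0 such that s‖x‖₂ ≤ ‖P(ξ)x‖₂ for all x ∈ ℝ^{M+N} (in particular for s = s_min(P(ξ))), one has 𝔼[‖u*_ξ(ε) − u^opt_{ξ=0}‖₂²] ≤ (ξ·M·‖θ^opt‖₂ / s)² + σ² · Tr(P(ξ)⁻¹ Ĩ P(ξ)⁻ᵀ), where Tr denotes the trace and P⁻ᵀ the transpose of the inverse. -/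
open Matrix MeasureTheory ProbabilityTheory

/-- The block matrix `Ĩ = [[I, 0], [0, 0]]`. -/
def iTilde (M N : ℕ) : Matrix (Fin M ⊕ Fin N) (Fin M ⊕ Fin N) ℝ :=
  Matrix.fromBlocks 1 0 0 0


/-!
The error splits as `u*_ξ(ε) - u^opt = d + P(ξ)⁻¹ (ε, 0)` with the deterministic bias
`d = (P(ξ)⁻¹ - P(0)⁻¹) (y, 0)`. As `ε` is centred with covariance `σ² I`, the cross term has
mean zero and `𝔼‖d + Bε‖² = ‖d‖² + σ² Tr(B Bᵀ)`, where `B Bᵀ = P(ξ)⁻¹ Ĩ P(ξ)⁻ᵀ` because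
`Ĩ = E Eᵀ` for the block injection `E = [I; 0]`. For the bias, `P(0) - P(ξ) = -ξM Ĩ` and the
resolvent identity `P(ξ)⁻¹ - P(0)⁻¹ = P(ξ)⁻¹ (P(0) - P(ξ)) P(0)⁻¹` give
`d = -ξM P(ξ)⁻¹ (θ^opt, 0)`, so `‖d‖ ≤ ξM ‖θ^opt‖ / s`.
-/

section EuclNorm

variable {ι : Type*} [Fintype ι]

lemma euclNorm_eq_sqrt (x : ι → ℝ) : euclNorm x = √(∑ i, x i ^ 2) := by
  simp [euclNorm, EuclideanSpace.norm_eq]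

lemma euclNorm_sq (x : ι → ℝ) : euclNorm x ^ 2 = ∑ i, x i ^ 2 := by
  rw [euclNorm_eq_sqrt, Real.sq_sqrt (by positivity)]

lemma euclNorm_smul (c : ℝ) (x : ι → ℝ) : euclNorm (c • x) = |c| * euclNorm x := by
  simp [euclNorm, norm_smul]

lemma euclNorm_nonneg (x : ι → ℝ) : 0 ≤ euclNorm x :=
  norm_nonneg _

lemma euclNorm_sum_elim_zero {κ : Type*} [Fintype κ] (x : ι → ℝ) :
    euclNorm (Sum.elim x (0 : κ → ℝ)) = euclNorm x := by
  simp [euclNorm_eq_sqrt, Fintype.sum_sum_type]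

lemma euclNorm_inv_mulVec_le [DecidableEq ι] {P : Matrix ι ι ℝ} (hP : IsUnit P) {s : ℝ}
    (hs : 0 < s) (hsmin : ∀ x, s * euclNorm x ≤ euclNorm (P *ᵥ x)) (z : ι → ℝ) :
    euclNorm (P⁻¹ *ᵥ z) ≤ euclNorm z / s := by
  rw [le_div_iff₀' hs]
  simpa [mulVec_mulVec, mul_nonsing_inv _ ((isUnit_iff_isUnit_det P).1 hP)] using
    hsmin (P⁻¹ *ᵥ z)

end EuclNorm

section SecondMoment

variable {Ω ι : Type*} [MeasurableSpace Ω] {μ : Measure Ω} {X : Ω → ι → ℝ}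

lemma integral_mul_eq_smul_one_of_indepFun [IsProbabilityMeasure μ] [DecidableEq ι]
    (hX : ∀ i, MemLp (fun ω => X ω i) 2 μ)
    (hindep : Pairwise fun i j => (fun ω => X ω i) ⟂ᵢ[μ] (fun ω => X ω j))
    (hmean : ∀ i, ∫ ω, X ω i ∂μ = 0) {v : ℝ} (hvar : ∀ i, Var[fun ω => X ω i; μ] = v)
    (i j : ι) : ∫ ω, X ω i * X ω j ∂μ = (v • 1 : Matrix ι ι ℝ) i j := by
  rcases eq_or_ne i j with rfl | hij
  · have := variance_eq_sub (hX i)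
    simp only [hvar, hmean] at this
    simp [this, sq]
  · rw [(hindep hij).integral_fun_mul_eq_mul_integral (hX i).aestronglyMeasurable
      (hX j).aestronglyMeasurable]
    simp [hmean, hij]

variable [Fintype ι] {C : Matrix ι ι ℝ}

lemma integral_sq_const_add_dotProduct [IsProbabilityMeasure μ]
    (hX : ∀ i, MemLp (fun ω => X ω i) 2 μ) (hmean : ∀ i, ∫ ω, X ω i ∂μ = 0)
    (hcov : ∀ i j, ∫ ω, X ω i * X ω j ∂μ = C i j) (c : ℝ) (a : ι → ℝ) :
    ∫ ω, (c + a ⬝ᵥ X ω) ^ 2 ∂μ = c ^ 2 + a ⬝ᵥ (C *ᵥ a) := by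
  have hlin : ∀ i, Integrable (fun ω => a i * X ω i) μ := fun i =>
    ((hX i).integrable one_le_two).const_mul _
  have hquad : ∀ i j, Integrable (fun ω => a i * a j * (X ω i * X ω j)) μ := fun i j =>
    (((hX i).integrable_mul (hX j)).const_mul (a i * a j)).congr
      (.of_forall fun ω => by simp only [Pi.mul_apply])
  have hexpand : ∀ ω, (c + a ⬝ᵥ X ω) ^ 2
      = c ^ 2 + 2 * c * ∑ i, a i * X ω i + ∑ i, ∑ j, a i * a j * (X ω i * X ω j) := by
    intro ω
    rw [dotProduct, add_sq, sq (∑ i, _), Finset.sum_mul_sum]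
    simp_rw [mul_mul_mul_comm]
  have hL : Integrable (fun ω => 2 * c * ∑ i, a i * X ω i) μ :=
    (integrable_finsetSum _ fun i _ => hlin i).const_mul _
  have hQ : Integrable (fun ω => ∑ i, ∑ j, a i * a j * (X ω i * X ω j)) μ :=
    integrable_finsetSum _ fun i _ => integrable_finsetSum _ fun j _ => hquad i j
  simp_rw [hexpand]
  rw [integral_add ((integrable_const _).fun_add hL) hQ, integral_add (integrable_const _) hL,
    integral_const_mul, integral_finsetSum _ fun i _ => hlin i,
    integral_finsetSum _ fun i _ => integrable_finsetSum _ fun j _ => hquad i j]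
  simp only [integral_const, probReal_univ, one_smul, integral_const_mul, hmean, mul_zero,
    Finset.sum_const_zero, add_zero, dotProduct, mulVec, Finset.mul_sum]
  congr 1
  refine Finset.sum_congr rfl fun i _ => ?_
  simp only [integral_finsetSum _ fun j _ => hquad i j, integral_const_mul, hcov]
  exact Finset.sum_congr rfl fun j _ => by ring

lemma memLp_const_add_dotProduct [IsFiniteMeasure μ] (hX : ∀ i, MemLp (fun ω => X ω i) 2 μ)
    (c : ℝ) (a : ι → ℝ) : MemLp (fun ω => c + a ⬝ᵥ X ω) 2 μ :=
  (memLp_const c).add (memLp_finsetSum _ fun i _ => (hX i).const_mul (a i))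

lemma integral_euclNorm_add_mulVec_sq {κ : Type*} [Fintype κ] [IsProbabilityMeasure μ]
    (hX : ∀ i, MemLp (fun ω => X ω i) 2 μ) (hmean : ∀ i, ∫ ω, X ω i ∂μ = 0)
    (hcov : ∀ i j, ∫ ω, X ω i * X ω j ∂μ = C i j) (d : κ → ℝ) (B : Matrix κ ι ℝ) :
    ∫ ω, euclNorm (d + B *ᵥ X ω) ^ 2 ∂μ = euclNorm d ^ 2 + (B * C * Bᵀ).trace := by
  simp only [euclNorm_sq, Pi.add_apply]
  change ∫ ω, ∑ k, (d k + B k ⬝ᵥ X ω) ^ 2 ∂μ = _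
  rw [integral_finsetSum _ fun k _ => (memLp_const_add_dotProduct hX (d k) (B k)).integrable_sq]
  simp only [integral_sq_const_add_dotProduct hX hmean hcov, Finset.sum_add_distrib]
  congr 1
  simp only [trace, diag, mul_apply, transpose_apply, dotProduct, mulVec, Finset.mul_sum,
    Finset.sum_mul]
  exact Finset.sum_congr rfl fun k _ => Finset.sum_comm.trans
    (Finset.sum_congr rfl fun _ _ => Finset.sum_congr rfl fun _ _ => by ring)

end SecondMoment

lemma ProbabilityTheory.HasLaw.integral_eq_of_gaussianReal {Ω : Type*} [MeasurableSpace Ω]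
    {μ : Measure Ω} {X : Ω → ℝ} {m : ℝ} {v : NNReal} (hX : HasLaw X (gaussianReal m v) μ) :
    ∫ ω, X ω ∂μ = m := by
  rw [hX.integral_eq, integral_id_gaussianReal]

section Pbdw

variable {M N : ℕ}

lemma pbdwMat_eq_add_smul_iTilde (A : Matrix (Fin M) (Fin M) ℝ) (K : Matrix (Fin M) (Fin N) ℝ)
    (ξ : ℝ) : pbdwMat A K ξ = pbdwMat A K 0 + (ξ * M) • iTilde M N := by
  simp [pbdwMat, iTilde, fromBlocks_smul, fromBlocks_add]

lemma iTilde_mulVec (u : Fin M ⊕ Fin N → ℝ) :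
    iTilde M N *ᵥ u = Sum.elim (fun i => u (.inl i)) 0 := by
  ext (i | i) <;> simp [iTilde, fromBlocks_mulVec]

variable (M N) in
def blockInl : Matrix (Fin M ⊕ Fin N) (Fin M) ℝ := fromRows 1 0

lemma blockInl_mulVec (x : Fin M → ℝ) : blockInl M N *ᵥ x = Sum.elim x 0 := by
  simp [blockInl]

lemma iTilde_eq_blockInl_mul_transpose : iTilde M N = blockInl M N * (blockInl M N)ᵀ := by
  rw [iTilde, blockInl, transpose_fromRows, fromRows_mul_fromCols]
  simp

lemma euclNorm_pbdw_bias_le {A : Matrix (Fin M) (Fin M) ℝ} {K : Matrix (Fin M) (Fin N) ℝ}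
    {ξ : ℝ} (hPξ : IsUnit (pbdwMat A K ξ)) (hP0 : IsUnit (pbdwMat A K 0)) {s : ℝ} (hs : 0 < s)
    (hsmin : ∀ x, s * euclNorm x ≤ euclNorm (pbdwMat A K ξ *ᵥ x)) (y : Fin M → ℝ) :
    euclNorm ((pbdwMat A K ξ)⁻¹ *ᵥ Sum.elim y 0 - (pbdwMat A K 0)⁻¹ *ᵥ Sum.elim y 0)
      ≤ |ξ * M| * euclNorm (fun i => ((pbdwMat A K 0)⁻¹ *ᵥ Sum.elim y 0) (.inl i)) / s := by
  have hdiff : pbdwMat A K 0 - pbdwMat A K ξ = -(ξ * M) • iTilde M N := by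
    rw [pbdwMat_eq_add_smul_iTilde A K ξ, sub_add_cancel_left, neg_smul]
  rw [← sub_mulVec, inv_sub_inv (iff_of_true hPξ hP0), hdiff, ← mulVec_mulVec, ← mulVec_mulVec,
    smul_mulVec, iTilde_mulVec]
  refine (euclNorm_inv_mulVec_le hPξ hs hsmin _).trans_eq ?_
  rw [euclNorm_smul, abs_neg, euclNorm_sum_elim_zero]

end Pbdw

theorem pbdw_mse_estimate_imperfect_general
    {M N : ℕ}
    (A : Matrix (Fin M) (Fin M) ℝ)
    (K : Matrix (Fin M) (Fin N) ℝ)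
    (ξ : ℝ)
    (hPξ : IsUnit (pbdwMat A K ξ)) (hP0 : IsUnit (pbdwMat A K 0))
    {Ω : Type*} [MeasurableSpace Ω] (μ : Measure Ω) [IsProbabilityMeasure μ]
    (ε : Ω → Fin M → ℝ) (σ : NNReal)
    (hmeas : ∀ i, Measurable fun ω => ε ω i)
    (hindep : iIndepFun (fun i ω => ε ω i) μ)
    (hgauss : ∀ i, Measure.map (fun ω => ε ω i) μ = gaussianReal 0 (σ ^ 2))
    (y : Fin M → ℝ)
    (s : ℝ) (hs : 0 < s)
    (hsmin : ∀ x : Fin M ⊕ Fin N → ℝ,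
      s * euclNorm x ≤ euclNorm ((pbdwMat A K ξ).mulVec x)) :
    ∫ ω, (euclNorm ((pbdwMat A K ξ)⁻¹.mulVec (Sum.elim (y + ε ω) 0)
            - (pbdwMat A K 0)⁻¹.mulVec (Sum.elim y 0))) ^ 2 ∂μ
      ≤ (ξ * (M : ℝ) *
            euclNorm (fun i : Fin M =>
              (pbdwMat A K 0)⁻¹.mulVec (Sum.elim y 0) (Sum.inl i)) / s) ^ 2
        + (σ : ℝ) ^ 2 * ((pbdwMat A K ξ)⁻¹ * iTilde M N * ((pbdwMat A K ξ)⁻¹)ᵀ).trace := by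
  set P := pbdwMat A K ξ
  set u₀ := (pbdwMat A K 0)⁻¹ *ᵥ Sum.elim y 0
  have hlaw (i : Fin M) : HasLaw (fun ω => ε ω i) (gaussianReal 0 (σ ^ 2)) μ :=
    ⟨(hmeas i).aemeasurable, hgauss i⟩
  have hL2 (i : Fin M) := (hlaw i).hasGaussianLaw.memLp_two
  have hmean (i : Fin M) := (hlaw i).integral_eq_of_gaussianReal
  have hcov := integral_mul_eq_smul_one_of_indepFun hL2 (fun i j hij => hindep.indepFun hij)
    hmean (v := (σ : ℝ) ^ 2) fun i => by simp [(hlaw i).variance_eq]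
  have herr (ω : Ω) : P⁻¹ *ᵥ Sum.elim (y + ε ω) 0 - u₀
      = (P⁻¹ *ᵥ Sum.elim y 0 - u₀) + (P⁻¹ * blockInl M N) *ᵥ ε ω := by
    have hsplit : Sum.elim (y + ε ω) (0 : Fin N → ℝ) = Sum.elim y 0 + Sum.elim (ε ω) 0 := by
      rw [← Sum.elim_add_add, add_zero]
    rw [← mulVec_mulVec, blockInl_mulVec, hsplit, mulVec_add]
    abel
  have htrace : P⁻¹ * blockInl M N * ((σ : ℝ) ^ 2 • (1 : Matrix (Fin M) (Fin M) ℝ))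
        * (P⁻¹ * blockInl M N)ᵀ
      = (σ : ℝ) ^ 2 • (P⁻¹ * iTilde M N * P⁻¹ᵀ) := by
    simp [iTilde_eq_blockInl_mul_transpose, transpose_mul, Matrix.mul_assoc]
  simp_rw [herr]
  rw [integral_euclNorm_add_mulVec_sq hL2 hmean hcov, htrace, trace_smul, smul_eq_mul]
  gcongr ?_ + _
  calc euclNorm (P⁻¹ *ᵥ Sum.elim y 0 - u₀) ^ 2
      ≤ (|ξ * M| * euclNorm (fun i => u₀ (.inl i)) / s) ^ 2 := by
        gcongr
        · exact euclNorm_nonneg _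
        · exact euclNorm_pbdw_bias_le hPξ hP0 hs hsmin y
    _ = _ := by rw [div_pow, mul_pow, sq_abs, ← mul_pow, ← div_pow]

/-- **PBDW a priori mean-squared error estimate for imperfect measurements
(second estimate of Theorem 2, matrix form).**
The components of the noise `ε` are independent and each distributed as a Gaussian
`N(0, σ²)`.  With `u^opt_{ξ=0} = P(0)⁻¹ (y, 0)` (first block `θ^opt`),
`u*_ξ(ε) = P(ξ)⁻¹ (y+ε, 0)`, and any `s > 0` with `s‖x‖₂ ≤ ‖P(ξ)x‖₂` for all `x`
(in particular `s = s_min(P(ξ))`), one has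
`𝔼[‖u*_ξ(ε) − u^opt_{ξ=0}‖₂²] ≤ (ξM‖θ^opt‖₂/s)² + σ²·Tr(P(ξ)⁻¹ Ĩ P(ξ)⁻ᵀ)`. -/
theorem pbdw_mse_estimate_imperfect
    {M N : ℕ} (hM : 0 < M) (hN : 0 < N)
    (A : Matrix (Fin M) (Fin M) ℝ) (hA : A.IsSymm)
    (K : Matrix (Fin M) (Fin N) ℝ)
    (ξ : ℝ) (hξ : 0 ≤ ξ)
    (hPξ : IsUnit (pbdwMat A K ξ)) (hP0 : IsUnit (pbdwMat A K 0))
    {Ω : Type*} [MeasurableSpace Ω] (μ : Measure Ω) [IsProbabilityMeasure μ]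
    (ε : Ω → Fin M → ℝ) (σ : NNReal)
    (hmeas : ∀ i, Measurable fun ω => ε ω i)
    (hindep : iIndepFun (fun i ω => ε ω i) μ)
    (hgauss : ∀ i, Measure.map (fun ω => ε ω i) μ = gaussianReal 0 (σ ^ 2))
    (y : Fin M → ℝ)
    (s : ℝ) (hs : 0 < s)
    (hsmin : ∀ x : Fin M ⊕ Fin N → ℝ,
      s * euclNorm x ≤ euclNorm ((pbdwMat A K ξ).mulVec x)) :
    ∫ ω, (euclNorm ((pbdwMat A K ξ)⁻¹.mulVec (Sum.elim (y + ε ω) 0)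
            - (pbdwMat A K 0)⁻¹.mulVec (Sum.elim y 0))) ^ 2 ∂μ
      ≤ (ξ * (M : ℝ) *
            euclNorm (fun i : Fin M =>
              (pbdwMat A K 0)⁻¹.mulVec (Sum.elim y 0) (Sum.inl i)) / s) ^ 2
        + (σ : ℝ) ^ 2 * ((pbdwMat A K ξ)⁻¹ * iTilde M N * ((pbdwMat A K ξ)⁻¹)ᵀ).trace :=
  pbdw_mse_estimate_imperfect_general A K ξ hPξ hP0 μ ε σ hmeas hindep hgauss y s hs hsmin
end
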